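/- arXiv:2007.09740 — 2 statements merged into one kernel-verified Lean document; each statement's English description precedes it below -/
import Mathlib

section
/- The stabilizer of the function g₀(v) = v₁⁴ + v₂⁴ + v₃⁴ on S² within SO(3) is exactly the rotational octahedral group: a rotation R ∈ SO(3) satisfies g₀(R·v) = g₀(v) for all v ∈ S² if and only if R is a signed permutation matrix with determinant 1. -/
open Matrix

lemma mem3_of (a : ℝ) (h : a ^ 2 * (1 - a ^ 2) = 0) : a = -1 ∨ a = 0 ∨ a = 1 := by
  rcases mul_eq_zero.mp h with h | h
  · right; left
    exact pow_eq_zero_iff (two_ne_zero).elim |>.mp h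
  · have h' : (1 - a) * (1 + a) = 0 := by nlinarith
    rcases mul_eq_zero.mp h' with h' | h'
    · right; right; linarith
    · left; linarith

lemma tri_mem (a b c : ℝ) (h2 : a ^ 2 + b ^ 2 + c ^ 2 = 1) (h4 : a ^ 4 + b ^ 4 + c ^ 4 = 1) :
    (a = -1 ∨ a = 0 ∨ a = 1) ∧ (b = -1 ∨ b = 0 ∨ b = 1) ∧ (c = -1 ∨ c = 0 ∨ c = 1) := by
  have ha2 : a ^ 2 ≤ 1 := by nlinarith [sq_nonneg b, sq_nonneg c]
  have hb2 : b ^ 2 ≤ 1 := by nlinarith [sq_nonneg a, sq_nonneg c]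
  have hc2 : c ^ 2 ≤ 1 := by nlinarith [sq_nonneg a, sq_nonneg b]
  have hA : a ^ 2 * (1 - a ^ 2) ≥ 0 := mul_nonneg (sq_nonneg a) (by linarith)
  have hB : b ^ 2 * (1 - b ^ 2) ≥ 0 := mul_nonneg (sq_nonneg b) (by linarith)
  have hC : c ^ 2 * (1 - c ^ 2) ≥ 0 := mul_nonneg (sq_nonneg c) (by linarith)
  have hsum : a ^ 2 * (1 - a ^ 2) + b ^ 2 * (1 - b ^ 2) + c ^ 2 * (1 - c ^ 2) = 0 := by nlinarith
  exact ⟨mem3_of a (by linarith), mem3_of b (by linarith), mem3_of c (by linarith)⟩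

lemma exu0 (f : Fin 3 → ℝ) (h0 : f 0 ≠ 0) (h1 : f 1 = 0) (h2 : f 2 = 0) : ∃! k, f k ≠ 0 :=
  ⟨0, h0, fun y hy => by
    fin_cases y
    · rfl
    · exact absurd h1 hy
    · exact absurd h2 hy⟩

lemma exu1 (f : Fin 3 → ℝ) (h0 : f 0 = 0) (h1 : f 1 ≠ 0) (h2 : f 2 = 0) : ∃! k, f k ≠ 0 :=
  ⟨1, h1, fun y hy => by
    fin_cases y
    · exact absurd h0 hy
    · rfl
    · exact absurd h2 hy⟩

lemma exu2 (f : Fin 3 → ℝ) (h0 : f 0 = 0) (h1 : f 1 = 0) (h2 : f 2 ≠ 0) : ∃! k, f k ≠ 0 :=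
  ⟨2, h2, fun y hy => by
    fin_cases y
    · exact absurd h0 hy
    · exact absurd h1 hy
    · rfl⟩

lemma exu3 (f : Fin 3 → ℝ)
    (hm : ∀ k, f k = -1 ∨ f k = 0 ∨ f k = 1)
    (hs : f 0 ^ 2 + f 1 ^ 2 + f 2 ^ 2 = 1) : ∃! k, f k ≠ 0 := by
  rcases hm 0 with h0 | h0 | h0 <;> rcases hm 1 with h1 | h1 | h1 <;>
    rcases hm 2 with h2 | h2 | h2 <;> rw [h0, h1, h2] at hs <;> norm_num at hs <;>
  first
  | exact exu0 f (by rw [h0]; norm_num) h1 h2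
  | exact exu1 f h0 (by rw [h1]; norm_num) h2
  | exact exu2 f h0 h1 (by rw [h2]; norm_num)

lemma row4 (f v : Fin 3 → ℝ) (j : Fin 3) (hval : ∀ k, f k = -1 ∨ f k = 0 ∨ f k = 1)
    (hj : f j ≠ 0) (hu : ∀ y, f y ≠ 0 → y = j) :
    (f 0 * v 0 + f 1 * v 1 + f 2 * v 2) ^ 4 = (v j) ^ 4 := by
  have hz : ∀ y, y ≠ j → f y = 0 := fun y hy => by
    by_contra h; exact hy (hu y h)
  have hfj : f j = -1 ∨ f j = 1 := by
    rcases hval j with h | h | h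
    · exact Or.inl h
    · exact absurd h hj
    · exact Or.inr h
  have h3 : j = 0 ∨ j = 1 ∨ j = 2 := by omega
  rcases h3 with rfl | rfl | rfl
  · rw [hz 1 (by decide), hz 2 (by decide)]; rcases hfj with h | h <;> rw [h] <;> ring
  · rw [hz 0 (by decide), hz 2 (by decide)]; rcases hfj with h | h <;> rw [h] <;> ring
  · rw [hz 0 (by decide), hz 1 (by decide)]; rcases hfj with h | h <;> rw [h] <;> ring

/-- the stabilizer of g₀(v) = v₁⁴+v₂⁴+v₃⁴ on S² within SO(3) is exactly the
rotational octahedral group: R ∈ SO(3) satisfies g₀(R v) = g₀(v) for all v ∈ S² iff R is a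
signed permutation matrix (of determinant 1, which is part of the SO(3) hypothesis). -/
theorem stmt_1 (R : Matrix (Fin 3) (Fin 3) ℝ)
    (horth : Rᵀ * R = 1) (hdet : R.det = 1) :
    (∀ v : Fin 3 → ℝ, (v 0) ^ 2 + (v 1) ^ 2 + (v 2) ^ 2 = 1 →
        (R.mulVec v 0) ^ 4 + (R.mulVec v 1) ^ 4 + (R.mulVec v 2) ^ 4
          = (v 0) ^ 4 + (v 1) ^ 4 + (v 2) ^ 4)
      ↔ ((∀ i j, R i j = -1 ∨ R i j = 0 ∨ R i j = 1)
          ∧ (∀ i, ∃! j, R i j ≠ 0) ∧ (∀ j, ∃! i, R i j ≠ 0)) := by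
  have hcol2 : ∀ j, R 0 j ^ 2 + R 1 j ^ 2 + R 2 j ^ 2 = 1 := by
    intro j
    have := congrFun (congrFun horth j) j
    simpa [Matrix.mul_apply, Fin.sum_univ_three, Matrix.transpose_apply, Matrix.one_apply,
      sq] using this
  have hRRt : R * Rᵀ = 1 := mul_eq_one_comm.mp horth
  have hrow2 : ∀ i, R i 0 ^ 2 + R i 1 ^ 2 + R i 2 ^ 2 = 1 := by
    intro i
    have := congrFun (congrFun hRRt i) i
    simpa [Matrix.mul_apply, Fin.sum_univ_three, Matrix.transpose_apply, Matrix.one_apply,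
      sq] using this
  constructor
  · intro h
    have hcol4 : ∀ j, R 0 j ^ 4 + R 1 j ^ 4 + R 2 j ^ 4 = 1 := by
      intro j
      have hv := h (Pi.single j 1) (by fin_cases j <;> simp [Pi.single_apply])
      rw [Matrix.mulVec_single] at hv
      fin_cases j <;> simpa [Pi.single_apply] using hv
    have hmem : ∀ i j, R i j = -1 ∨ R i j = 0 ∨ R i j = 1 := by
      intro i j
      have := tri_mem _ _ _ (hcol2 j) (hcol4 j)
      fin_cases i <;> tauto
    refine ⟨hmem, ?_, ?_⟩
    · intro i
      exact exu3 (fun j => R i j) (fun k => hmem i k) (hrow2 i)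
    · intro j
      exact exu3 (fun i => R i j) (fun k => hmem k j) (hcol2 j)
  · rintro ⟨hval, hrow, hcol⟩ v hv
    obtain ⟨j0, hj0, hu0⟩ := hrow 0
    obtain ⟨j1, hj1, hu1⟩ := hrow 1
    obtain ⟨j2, hj2, hu2⟩ := hrow 2
    have hdist : ∀ (a b : Fin 3) (ja jb : Fin 3), R a ja ≠ 0 → R b jb ≠ 0 → a ≠ b →
        ja ≠ jb := by
      intro a b ja jb ha hb hab hEq
      obtain ⟨i, -, hu⟩ := hcol ja
      have h1 := hu a ha
      have h2 := hu b (by rw [hEq]; exact hb)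
      exact hab (h1.trans h2.symm)
    have hne01 : j0 ≠ j1 := hdist 0 1 j0 j1 hj0 hj1 (by decide)
    have hne02 : j0 ≠ j2 := hdist 0 2 j0 j2 hj0 hj2 (by decide)
    have hne12 : j1 ≠ j2 := hdist 1 2 j1 j2 hj1 hj2 (by decide)
    have hm : ∀ i, R.mulVec v i = R i 0 * v 0 + R i 1 * v 1 + R i 2 * v 2 := by
      intro i
      simp [Matrix.mulVec, dotProduct, Fin.sum_univ_three]
    rw [hm 0, hm 1, hm 2,
      row4 (fun k => R 0 k) v j0 (hval 0) hj0 hu0,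
      row4 (fun k => R 1 k) v j1 (hval 1) hj1 hu1,
      row4 (fun k => R 2 k) v j2 (hval 2) hj2 hu2]
    have e0 : j0 = 0 ∨ j0 = 1 ∨ j0 = 2 := by omega
    have e1 : j1 = 0 ∨ j1 = 1 ∨ j1 = 2 := by omega
    have e2 : j2 = 0 ∨ j2 = 1 ∨ j2 = 2 := by omega
    rcases e0 with rfl | rfl | rfl <;> rcases e1 with rfl | rfl | rfl <;>
      rcases e2 with rfl | rfl | rfl <;>
      first
      | exact absurd rfl hne01
      | exact absurd rfl hne02
      | exact absurd rfl hne12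
      | ring
end

section
/- For a constant unit vector n̂, the set of octahedral frames aligned to n̂, parameterized as f(θ) = exp(v_n · L) exp(θ L_z) f₀ for θ ∈ [0, 2π), forms a circle in ℝ⁹ of radius √(5/12): there exists a center c and orthonormal vectors e₁, e₂ in ℝ⁹ such that f(θ) = c + √(5/12)(cos 4θ · e₁ + sin 4θ · e₂). -/
open Matrix

/-- for a constant unit normal, the set of octahedral frames aligned to it,
f(θ) = exp(v_n·L) exp(θ L_z) f₀  (where exp(v_n·L) = R is a fixed orthogonal 9×9 matrix and
exp(θ L_z) f₀ = (√(5/12) cos 4θ) e₁' + √(7/12) e₅' + (√(5/12) sin 4θ) e₉'), is a circle of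
radius √(5/12) in ℝ⁹: there are a center c and orthonormal e₁, e₂ with
f(θ) = c + √(5/12)(cos 4θ · e₁ + sin 4θ · e₂). -/
theorem stmt_8 (R : Matrix (Fin 9) (Fin 9) ℝ) (hR : Rᵀ * R = 1)
    (f : ℝ → Fin 9 → ℝ)
    (hf : ∀ θ : ℝ, f θ = R.mulVec
      ![Real.sqrt (5/12) * Real.cos (4*θ), 0, 0, 0, Real.sqrt (7/12), 0, 0, 0,
        Real.sqrt (5/12) * Real.sin (4*θ)]) :
    ∃ (c e₁ e₂ : Fin 9 → ℝ),
      (∑ i, e₁ i * e₁ i) = 1 ∧ (∑ i, e₂ i * e₂ i) = 1 ∧ (∑ i, e₁ i * e₂ i) = 0 ∧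
      ∀ θ : ℝ, f θ = c + Real.sqrt (5/12) •
        (Real.cos (4*θ) • e₁ + Real.sin (4*θ) • e₂) := by
  have key : ∀ a b : Fin 9, (∑ i, R i a * R i b) = (Rᵀ * R) a b := by
    intro a b
    simp [Matrix.mul_apply, Matrix.transpose_apply]
  refine ⟨fun i => R i 4 * Real.sqrt (7/12), fun i => R i 0, fun i => R i 8, ?_, ?_, ?_, ?_⟩
  · rw [key, hR]; simp
  · rw [key, hR]; simp
  · rw [key, hR]; simp [Matrix.one_apply]
  · intro θ
    rw [hf θ]
    funext i
    simp [Matrix.mulVec, dotProduct, Fin.sum_univ_succ, Fin.succ]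
    ring
end
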